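/- arXiv:1801.04449 — 2 statements merged into one kernel-verified Lean document; each statement's English description precedes it below -/
import Mathlib

section
/- Let X be a Banach space, H a Hilbert space, T : X → H bounded linear, h ∈ X*, α > 0, and J(f) = (1/2)‖Tf‖² - ⟨h,f⟩ + α‖f‖_X. If f₀ minimizes J, then for all f ∈ X one has |⟨T f₀, T f⟩_H - ⟨h, f⟩| ≤ α ‖f‖_X. -/
open scoped InnerProductSpace

/-- Euler–Lagrange inequality for minimizers of
`J(f) = (1/2)‖Tf‖² - ⟨h,f⟩ + α‖f‖`: if `f₀` minimizes `J` then
`|⟨Tf₀, Tf⟩ - ⟨h,f⟩| ≤ α‖f‖` for all `f`. -/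
theorem euler_lagrange_inequality
    {X H : Type*}
    [NormedAddCommGroup X] [NormedSpace ℝ X]
    [NormedAddCommGroup H] [InnerProductSpace ℝ H]
    (T : X →L[ℝ] H) (h : StrongDual ℝ X) (α : ℝ) (hα : 0 < α)
    (J : X → ℝ)
    (hJ : ∀ f : X, J f = (1/2) * ‖T f‖^2 - h f + α * ‖f‖)
    (f₀ : X) (hmin : ∀ f : X, J f₀ ≤ J f) :
    ∀ f : X, |⟪T f₀, T f⟫_ℝ - h f| ≤ α * ‖f‖ := by
  intro f
  set A : ℝ := ⟪T f₀, T f⟫_ℝ - h f with hA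
  have base : ∀ μ : ℝ, -(μ * A) ≤ μ^2/2 * ‖T f‖^2 + α * (|μ| * ‖f‖) := by
    intro μ
    have h1 := hmin (f₀ + μ • f)
    rw [hJ, hJ] at h1
    have hnorm : ‖f₀ + μ • f‖ - ‖f₀‖ ≤ |μ| * ‖f‖ := by
      have h2 := norm_add_le f₀ (μ • f)
      rw [norm_smul, Real.norm_eq_abs] at h2
      linarith
    have hexp : ‖T (f₀ + μ • f)‖^2
        = ‖T f₀‖^2 + 2 * (μ * ⟪T f₀, T f⟫_ℝ) + μ^2 * ‖T f‖^2 := by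
      rw [map_add, map_smul, norm_add_sq_real, real_inner_smul_right, norm_smul,
        Real.norm_eq_abs, mul_pow, sq_abs]
    have hh : h (f₀ + μ • f) = h f₀ + μ * h f := by
      simp [map_add, map_smul]
    rw [hexp, hh] at h1
    have : 0 ≤ μ * A + μ^2/2 * ‖T f‖^2 + α * (‖f₀ + μ • f‖ - ‖f₀‖) := by
      simp only [hA]; nlinarith [h1]
    nlinarith [mul_le_mul_of_nonneg_left hnorm (le_of_lt hα)]
  have key : ∀ t : ℝ, 0 < t → |A| ≤ α * ‖f‖ + t * ‖T f‖^2 / 2 := by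
    intro t ht
    have h1 := base t
    have h2 := base (-t)
    rw [abs_of_pos ht] at h1
    rw [abs_neg, abs_of_pos ht] at h2
    rw [abs_le]
    constructor
    · nlinarith
    · nlinarith
  by_contra hcon
  push_neg at hcon
  set ε : ℝ := |A| - α * ‖f‖ with hε
  have hεpos : 0 < ε := by linarith
  have htpos : 0 < ε / (‖T f‖^2 + 1) := by positivity
  have := key (ε / (‖T f‖^2 + 1)) htpos
  have hle : ε / (‖T f‖^2 + 1) * ‖T f‖^2 / 2 < ε := by
    rw [div_mul_eq_mul_div, div_div, div_lt_iff₀ (by positivity)]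
    nlinarith [sq_nonneg (‖T f‖)]
  linarith
end

section
/- Let X be a Banach space, H a Hilbert space, T : X → H bounded linear, h ∈ X*, α > 0, and J(f) = (1/2)‖Tf‖² - ⟨h,f⟩ + α‖f‖_X. If f₀ minimizes J and the identity ⟨T f₀, T f⟩_H = ⟨g, f⟩ holds for all f ∈ X for some g ∈ X*, then ‖g - h‖_{X*} ≤ α. Moreover J(f₀) = -(1/2)‖T f₀‖²_H. -/
open scoped InnerProductSpace

/-- If `f₀` minimizes `J(f) = (1/2)‖Tf‖² - ⟨h,f⟩ + α‖f‖` and `g ∈ X*` represents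
`f ↦ ⟨Tf₀, Tf⟩`, then `‖g - h‖_{X*} ≤ α` and `J(f₀) = -(1/2)‖Tf₀‖²`. -/
theorem minimizer_data_fit_and_value
    {X H : Type*}
    [NormedAddCommGroup X] [NormedSpace ℝ X]
    [NormedAddCommGroup H] [InnerProductSpace ℝ H]
    (T : X →L[ℝ] H) (h g : StrongDual ℝ X) (α : ℝ) (hα : 0 < α)
    (J : X → ℝ)
    (hJ : ∀ f : X, J f = (1/2) * ‖T f‖^2 - h f + α * ‖f‖)
    (f₀ : X) (hmin : ∀ f : X, J f₀ ≤ J f)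
    (hg : ∀ f : X, ⟪T f₀, T f⟫_ℝ = g f) :
    ‖g - h‖ ≤ α ∧ J f₀ = -(1/2) * ‖T f₀‖^2 := by
  -- Key perturbation inequality
  have key : ∀ (f : X) (t : ℝ), 0 < t →
      -(α * ‖f‖) - t / 2 * ‖T f‖ ^ 2 ≤ g f - h f := by
    intro f t ht
    have h1 := hmin (f₀ + t • f)
    rw [hJ, hJ] at h1
    have hexp : ‖T (f₀ + t • f)‖ ^ 2
        = ‖T f₀‖ ^ 2 + 2 * (t * g f) + t ^ 2 * ‖T f‖ ^ 2 := by
      rw [map_add, map_smul]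
      rw [norm_add_sq_real, real_inner_smul_right, hg, norm_smul]
      simp [mul_pow, sq_abs]
    have hh : h (f₀ + t • f) = h f₀ + t * h f := by
      simp [map_add, map_smul]
    have hn : ‖f₀ + t • f‖ ≤ ‖f₀‖ + t * ‖f‖ := by
      calc ‖f₀ + t • f‖ ≤ ‖f₀‖ + ‖t • f‖ := norm_add_le _ _
        _ = ‖f₀‖ + t * ‖f‖ := by rw [norm_smul, Real.norm_eq_abs, abs_of_pos ht]
    rw [hexp, hh] at h1
    nlinarith [h1, mul_le_mul_of_nonneg_left hn hα.le]
  have hub : ∀ f : X, g f - h f ≤ α * ‖f‖ := by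
    intro f
    refine le_of_forall_pos_le_add ?_
    intro ε hε
    have hden : (0:ℝ) < ‖T f‖ ^ 2 + 1 := by positivity
    have ht : 0 < ε / (‖T f‖ ^ 2 + 1) := div_pos hε hden
    have := key (-f) (ε / (‖T f‖ ^ 2 + 1)) ht
    simp only [map_neg, norm_neg] at this
    have hfrac : ε / (‖T f‖ ^ 2 + 1) / 2 * ‖T f‖ ^ 2 ≤ ε := by
      rw [div_div, div_mul_eq_mul_div, div_le_iff₀ (by positivity)]
      nlinarith [sq_nonneg (‖T f‖)]
    linarith
  constructor
  · refine (g - h).opNorm_le_bound hα.le ?_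
    intro f
    simp only [ContinuousLinearMap.sub_apply, Real.norm_eq_abs]
    rw [abs_le]
    constructor
    · have := hub (-f)
      simp only [map_neg, norm_neg] at this
      linarith
    · exact hub f
  · -- value identity
    set a : ℝ := ‖T f₀‖ ^ 2 with ha
    have hanon : 0 ≤ a := by positivity
    have cmp : ∀ t : ℝ, 0 ≤ t →
        J f₀ ≤ t ^ 2 / 2 * a - t * h f₀ + α * (t * ‖f₀‖) := by
      intro t ht
      have h1 := hmin (t • f₀)
      simp only [hJ] at h1
      have hT : ‖T (t • f₀)‖ ^ 2 = t ^ 2 * a := by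
        rw [map_smul, norm_smul, mul_pow, Real.norm_eq_abs, sq_abs]
      have hh : h (t • f₀) = t * h f₀ := by simp
      have hn : ‖t • f₀‖ = t * ‖f₀‖ := by
        rw [norm_smul, Real.norm_eq_abs, abs_of_nonneg ht]
      rw [hT, hh, hn] at h1
      rw [hJ]
      simp only [ha] at h1 ⊢
      linarith
    have hJ0 : J f₀ = a / 2 - h f₀ + α * ‖f₀‖ := by rw [hJ]; ring
    set b : ℝ := h f₀ - α * ‖f₀‖ with hb
    have hcmp' : ∀ t : ℝ, 0 ≤ t → 0 ≤ (t ^ 2 - 1) / 2 * a - (t - 1) * b := by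
      intro t ht
      have := cmp t ht
      rw [hJ0] at this
      simp only [hb]
      nlinarith
    have hba : b ≤ a := by
      refine le_of_forall_pos_le_add ?_
      intro ε hε
      have hεa : 0 < ε / (a + 1) := div_pos hε (by linarith)
      have := hcmp' (1 + ε / (a + 1)) (by linarith)
      have hfa : ε / (a + 1) * a ≤ ε := by
        rw [div_mul_eq_mul_div, div_le_iff₀ (by linarith)]
        nlinarith
      nlinarith
    have hab : a ≤ b := by
      refine le_of_forall_pos_le_add ?_
      intro ε hε
      set s : ℝ := min (1/2) (ε / (a + 1)) with hs
      have hs0 : 0 < s := lt_min (by norm_num) (div_pos hε (by linarith))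
      have hs1 : s ≤ 1/2 := min_le_left _ _
      have hs2 : s ≤ ε / (a + 1) := min_le_right _ _
      have := hcmp' (1 - s) (by linarith)
      have hfa : s * a ≤ ε := by
        have : s * a ≤ ε / (a + 1) * a :=
          mul_le_mul_of_nonneg_right hs2 hanon
        have h2 : ε / (a + 1) * a ≤ ε := by
          rw [div_mul_eq_mul_div, div_le_iff₀ (by linarith)]
          nlinarith
        linarith
      nlinarith
    have hax : a = b := le_antisymm hab hba
    rw [hJ0]
    have : h f₀ - α * ‖f₀‖ = a := hax.symm
    linarith
end
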